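/- If G is a claw-free finite simple graph and H is any finite simple graph, then the {2}-domination number of the Cartesian product satisfies γ_{{2}}(G □ H) ≥ γ(G)γ(H). -/

import Mathlib

open SimpleGraph Finset
open scoped Classical

/-- The closed neighborhood of `v` as a finset. -/
noncomputable def closedNbr {V : Type*} [Fintype V] (G : SimpleGraph V) (v : V) : Finset V :=
  Finset.univ.filter (fun u => u = v ∨ G.Adj u v)

/-- `S` is a dominating set of `G`. -/
def IsDomSet {V : Type*} (G : SimpleGraph V) (S : Finset V) : Prop :=
  ∀ v, v ∉ S → ∃ u ∈ S, G.Adj u v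

/-- The domination number γ(G). -/
noncomputable def domNum (V : Type*) [Fintype V] (G : SimpleGraph V) : ℕ :=
  sInf {n | ∃ S : Finset V, IsDomSet G S ∧ S.card = n}

/-- `S` is an independent dominating set of `G`. -/
def IsIndepDomSet {V : Type*} (G : SimpleGraph V) (S : Finset V) : Prop :=
  IsDomSet G S ∧ ∀ u ∈ S, ∀ v ∈ S, ¬ G.Adj u v

/-- The independent domination number i(G). -/
noncomputable def indepDomNum (V : Type*) [Fintype V] (G : SimpleGraph V) : ℕ :=
  sInf {n | ∃ S : Finset V, IsIndepDomSet G S ∧ S.card = n}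

/-- `S` is a 2-dominating set of `G`. -/
noncomputable def IsTwoDomSet {V : Type*} [Fintype V] (G : SimpleGraph V) (S : Finset V) : Prop :=
  ∀ v, v ∉ S → 2 ≤ (S.filter (fun u => G.Adj u v)).card

/-- The 2-domination number γ₂(G). -/
noncomputable def twoDomNum (V : Type*) [Fintype V] (G : SimpleGraph V) : ℕ :=
  sInf {n | ∃ S : Finset V, IsTwoDomSet G S ∧ S.card = n}

/-- `f` is a {k}-dominating function on `G`. -/
noncomputable def IsKDomFun {V : Type*} [Fintype V] (G : SimpleGraph V) (k : ℕ) (f : V → ℕ) : Prop :=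
  (∀ v, f v ≤ k) ∧ ∀ v, k ≤ ∑ u ∈ closedNbr G v, f u

/-- The {k}-domination number γ_{k}(G). -/
noncomputable def kDomNum (V : Type*) [Fintype V] (G : SimpleGraph V) (k : ℕ) : ℕ :=
  sInf {w | ∃ f : V → ℕ, IsKDomFun G k f ∧ w = ∑ v, f v}

/-- `f` is a weak {k}-dominating function on `G`. -/
noncomputable def IsWeakKDomFun {V : Type*} [Fintype V] (G : SimpleGraph V) (k : ℕ) (f : V → ℕ) : Prop :=
  (∀ v, f v ≤ k) ∧ ∀ v, f v = 0 → k ≤ ∑ u ∈ closedNbr G v, f u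

/-- The weak {k}-domination number γ_{w{k}}(G). -/
noncomputable def weakKDomNum (V : Type*) [Fintype V] (G : SimpleGraph V) (k : ℕ) : ℕ :=
  sInf {w | ∃ f : V → ℕ, IsWeakKDomFun G k f ∧ w = ∑ v, f v}

/-- `G` is claw-free: no induced K_{1,3}. -/
def ClawFree {V : Type*} (G : SimpleGraph V) : Prop :=
  ¬ ∃ v a b c : V, a ≠ b ∧ a ≠ c ∧ b ≠ c ∧
    G.Adj v a ∧ G.Adj v b ∧ G.Adj v c ∧ ¬ G.Adj a b ∧ ¬ G.Adj a c ∧ ¬ G.Adj b c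

/-!
Let `I` be a maximal independent set of `G`, so `γ(G) ≤ |I|`, and let `f` be a
{2}-dominating function of `G □ H`. For `g ∈ I`, the support of the fibre `f (g, ·)` together
with the set `B g` of vertices whose closed `H`-neighbourhood gets no weight from that fibre
dominates `H`, so `γ(H) ≤ f({g} × H) + |B g|`. Every `(g, h)` with `h ∈ B g` receives weight `2`
from `N(g) × {h}`; as `G` is claw-free, a vertex outside `I` has at most two neighbours in `I`,
hence `2 ∑_{g ∈ I} |B g| ≤ 2 f(Iᶜ × H)`. Summing over `I` gives `|I| γ(H) ≤ ∑ f`.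
-/

section

variable {V W : Type*}

theorem ClawFree.card_filter_adj_le_two {G : SimpleGraph V} (hG : ClawFree G) {I : Finset V}
    (hI : ∀ u ∈ I, ∀ v ∈ I, ¬ G.Adj u v) (u : V) : (I.filter (G.Adj u)).card ≤ 2 := by
  by_contra! hcard
  obtain ⟨a, ha, b, hb, c, hc, hab, hac, hbc⟩ := two_lt_card.1 hcard
  rw [mem_filter] at ha hb hc
  exact hG ⟨u, a, b, c, hab, hac, hbc, ha.2, hb.2, hc.2,
    hI a ha.1 b hb.1, hI a ha.1 c hc.1, hI b hb.1 c hc.1⟩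

variable [Fintype V] [Fintype W]

theorem domNum_le_card {G : SimpleGraph V} {S : Finset V} (hS : IsDomSet G S) :
    domNum V G ≤ S.card :=
  Nat.sInf_le ⟨S, hS, rfl⟩

theorem le_kDomNum {G : SimpleGraph V} {k n : ℕ}
    (h : ∀ f : V → ℕ, IsKDomFun G k f → n ≤ ∑ v, f v) : n ≤ kDomNum V G k := by
  have hconst : IsKDomFun G k (fun _ => k) :=
    ⟨fun _ => le_rfl, fun v => Finset.single_le_sum (f := fun _ => k) (fun _ _ => Nat.zero_le _)
      (by simp [closedNbr] : v ∈ closedNbr G v)⟩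
  exact le_csInf ⟨_, _, hconst, rfl⟩ (by rintro _ ⟨f, hf, rfl⟩; exact h f hf)

/-- A maximal independent set dominates. -/
theorem exists_isIndepDomSet (G : SimpleGraph V) : ∃ I : Finset V, IsIndepDomSet G I := by
  obtain ⟨I, hI, hmax⟩ := Finset.exists_max_image
    (univ.filter fun I : Finset V => ∀ u ∈ I, ∀ v ∈ I, ¬ G.Adj u v) Finset.card ⟨∅, by simp⟩
  rw [mem_filter] at hI
  refine ⟨I, fun v hv => ?_, hI.2⟩
  by_contra! hfree
  have hindep : ∀ u ∈ insert v I, ∀ w ∈ insert v I, ¬ G.Adj u w := by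
    simp only [mem_insert]
    rintro u (rfl | hu) w (rfl | hw)
    exacts [G.irrefl, fun h => hfree w hw h.symm, hfree u hu, hI.2 u hu w hw]
  have := hmax (insert v I) (mem_filter.2 ⟨mem_univ _, hindep⟩)
  rw [card_insert_of_notMem hv] at this
  omega

theorem closedNbr_eq_insert_neighborFinset (G : SimpleGraph V) (v : V) :
    closedNbr G v = insert v (G.neighborFinset v) := by
  ext u
  simp [closedNbr, adj_comm]

theorem closedNbr_boxProd (G : SimpleGraph V) (H : SimpleGraph W) (g : V) (h : W) :
    closedNbr (G □ H) (g, h) = closedNbr G g ×ˢ {h} ∪ {g} ×ˢ closedNbr H h := by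
  ext ⟨a, b⟩
  simp only [closedNbr, mem_filter, mem_univ, true_and, boxProd_adj, Prod.mk.injEq,
    mem_union, mem_product, mem_singleton]
  tauto

theorem sum_closedNbr_boxProd_le (G : SimpleGraph V) (H : SimpleGraph W) (f : V × W → ℕ)
    (g : V) (h : W) :
    ∑ x ∈ closedNbr (G □ H) (g, h), f x ≤
      ∑ u ∈ closedNbr G g, f (u, h) + ∑ w ∈ closedNbr H h, f (g, w) := by
  rw [closedNbr_boxProd]
  refine (Nat.le.intro sum_union_inter).trans_eq ?_
  simp

noncomputable def undominated (H : SimpleGraph W) (φ : W → ℕ) : Finset W :=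
  univ.filter fun h => ∑ w ∈ closedNbr H h, φ w = 0

theorem isDomSet_support_union_undominated (H : SimpleGraph W) (φ : W → ℕ) :
    IsDomSet H (univ.filter (φ · ≠ 0) ∪ undominated H φ) := by
  intro h hh
  simp only [undominated, mem_union, mem_filter, mem_univ, true_and, not_or, not_not] at hh
  obtain ⟨w, hw, hφw⟩ := exists_ne_zero_of_sum_ne_zero hh.2
  have hwh : w ≠ h := by rintro rfl; exact hφw hh.1
  refine ⟨w, by simp [hφw], ?_⟩
  simpa [closedNbr, hwh] using hw

theorem card_filter_ne_zero_le_sum {ι : Type*} (s : Finset ι) (φ : ι → ℕ) :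
    (s.filter (φ · ≠ 0)).card ≤ ∑ i ∈ s, φ i :=
  calc (s.filter (φ · ≠ 0)).card ≤ ∑ i ∈ s.filter (φ · ≠ 0), φ i := by
        simpa using card_nsmul_le_sum _ φ 1 fun i hi => Nat.one_le_iff_ne_zero.2 (mem_filter.1 hi).2
    _ ≤ ∑ i ∈ s, φ i := sum_le_sum_of_subset (filter_subset _ _)

theorem domNum_le_sum_add_card_undominated (H : SimpleGraph W) (φ : W → ℕ) :
    domNum W H ≤ ∑ w, φ w + (undominated H φ).card :=
  calc domNum W H ≤ (univ.filter (φ · ≠ 0) ∪ undominated H φ).card :=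
        domNum_le_card (isDomSet_support_union_undominated H φ)
    _ ≤ (univ.filter (φ · ≠ 0)).card + (undominated H φ).card := card_union_le _ _
    _ ≤ ∑ w, φ w + (undominated H φ).card := by
        gcongr; exact card_filter_ne_zero_le_sum _ _

/-- `(g, h)` gets no weight from its `H`-fibre, so all of it comes from the neighbours of `g`. -/
theorem le_sum_neighborFinset_of_mem_undominated {G : SimpleGraph V} {H : SimpleGraph W}
    {k : ℕ} {f : V × W → ℕ} (hf : IsKDomFun (G □ H) k f) {g : V} {h : W}
    (hh : h ∈ undominated H (fun w => f (g, w))) :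
    k ≤ ∑ u ∈ G.neighborFinset g, f (u, h) := by
  rw [undominated, mem_filter] at hh
  have hfgh : f (g, h) = 0 := sum_eq_zero_iff.1 hh.2 h (by simp [closedNbr])
  have := (hf.2 (g, h)).trans (sum_closedNbr_boxProd_le G H f g h)
  rwa [hh.2, add_zero, closedNbr_eq_insert_neighborFinset,
    sum_insert (by simp), hfgh, zero_add] at this

theorem mul_card_undominated_le {G : SimpleGraph V} {H : SimpleGraph W}
    {k : ℕ} {f : V × W → ℕ} (hf : IsKDomFun (G □ H) k f) (g : V) :
    k * (undominated H (fun w => f (g, w))).card ≤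
      ∑ u ∈ G.neighborFinset g, ∑ h, f (u, h) :=
  calc k * (undominated H (fun w => f (g, w))).card
      = ∑ _h ∈ undominated H (fun w => f (g, w)), k := by rw [sum_const, smul_eq_mul, mul_comm]
    _ ≤ ∑ h ∈ undominated H (fun w => f (g, w)), ∑ u ∈ G.neighborFinset g, f (u, h) :=
        sum_le_sum fun h hh => le_sum_neighborFinset_of_mem_undominated hf hh
    _ ≤ ∑ h, ∑ u ∈ G.neighborFinset g, f (u, h) := sum_le_sum_of_subset (subset_univ _)
    _ = ∑ u ∈ G.neighborFinset g, ∑ h, f (u, h) := sum_comm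

/-- Double counting: in a claw-free graph each vertex outside an independent set `I` has at most
two neighbours in `I`, and none inside it. -/
theorem ClawFree.sum_sum_neighborFinset_le {G : SimpleGraph V} (hG : ClawFree G) {I : Finset V}
    (hI : ∀ u ∈ I, ∀ v ∈ I, ¬ G.Adj u v) (r : V → ℕ) :
    ∑ g ∈ I, ∑ u ∈ G.neighborFinset g, r u ≤ 2 * ∑ u ∈ Iᶜ, r u := by
  have hswap : ∑ g ∈ I, ∑ u ∈ G.neighborFinset g, r u =
      ∑ u ∈ Iᶜ, ∑ _g ∈ I.filter (G.Adj u), r u :=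
    sum_comm' fun g u => by
      simp only [mem_neighborFinset, mem_filter, mem_compl]
      exact ⟨fun ⟨hg, hgu⟩ => ⟨⟨hg, hgu.symm⟩, fun hu => hI g hg u hu hgu⟩,
        fun ⟨⟨hg, hug⟩, _⟩ => ⟨hg, hug.symm⟩⟩
  rw [hswap, mul_sum]
  refine sum_le_sum fun u _ => ?_
  rw [sum_const, smul_eq_mul]
  exact Nat.mul_le_mul_right _ (hG.card_filter_adj_le_two hI u)

end

theorem stmt7 {V W : Type*} [Fintype V] [Fintype W]
    (G : SimpleGraph V) (H : SimpleGraph W) (hG : ClawFree G) :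
    domNum V G * domNum W H ≤ kDomNum (V × W) (G □ H) 2 := by
  obtain ⟨I, hIdom, hIind⟩ := exists_isIndepDomSet G
  refine le_kDomNum fun f hf => ?_
  set row : V → ℕ := fun u => ∑ h, f (u, h)
  set B : V → Finset W := fun g => undominated H fun w => f (g, w)
  have hB : 2 * ∑ g ∈ I, (B g).card ≤ 2 * ∑ u ∈ Iᶜ, row u :=
    calc 2 * ∑ g ∈ I, (B g).card = ∑ g ∈ I, 2 * (B g).card := mul_sum ..
      _ ≤ ∑ g ∈ I, ∑ u ∈ G.neighborFinset g, row u :=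
          sum_le_sum fun g _ => mul_card_undominated_le hf g
      _ ≤ 2 * ∑ u ∈ Iᶜ, row u := hG.sum_sum_neighborFinset_le hIind row
  calc domNum V G * domNum W H ≤ I.card * domNum W H :=
        Nat.mul_le_mul_right _ (domNum_le_card hIdom)
    _ = ∑ _g ∈ I, domNum W H := by rw [sum_const, smul_eq_mul]
    _ ≤ ∑ g ∈ I, (row g + (B g).card) :=
        sum_le_sum fun g _ => domNum_le_sum_add_card_undominated H _
    _ = ∑ g ∈ I, row g + ∑ g ∈ I, (B g).card := sum_add_distrib
    _ ≤ ∑ g ∈ I, row g + ∑ u ∈ Iᶜ, row u := by omega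
    _ = ∑ v, f v := by rw [sum_add_sum_compl, ← Fintype.sum_prod_type]
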